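/- arXiv:1103.0113 — 2 statements merged into one kernel-verified Lean document; each statement's English description precedes it below -/
import Mathlib

section
/- Let x₀ ∈ ℝⁿ, φ(x) = log|x - x₀|, and ω ∈ 𝕊^{n-1}. Define ψ(x) = π/2 - arctan( (ω·(x-x₀)) / sqrt(|x-x₀|² - (ω·(x-x₀))²) ) on the open set where |x - x₀|² > (ω·(x - x₀))². Then |∇ψ|² = |∇φ|² and ∇φ · ∇ψ = 0 on this set; that is, ψ solves the eikonal equation associated with φ. -/
open scoped RealInnerProductSpace

open Real

/-! With `u = x - x₀`, `a = ⟪ω, u⟫` and `s = √(‖u‖² - a²)`, the chain rule gives `∇φ = u / ‖u‖²`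
and `∇ψ = (a • u - ‖u‖² • ω) / (‖u‖² s)`. The vector `a • u - ‖u‖² • ω` is orthogonal to `u`,
and for a unit vector `ω` its squared length is `‖u‖² s²`, so `‖∇ψ‖² = 1 / ‖u‖² = ‖∇φ‖²`. -/

section GradientCalculus

variable {E : Type*} [NormedAddCommGroup E] [InnerProductSpace ℝ E] [CompleteSpace E]
  {f g : E → ℝ} {f' g' x : E}

theorem HasDerivAt.comp_hasGradientAt {h : ℝ → ℝ} {h' : ℝ} (hf : HasGradientAt f f' x)
    (hh : HasDerivAt h h' (f x)) : HasGradientAt (fun y => h (f y)) (h' • f') x := by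
  rw [hasGradientAt_iff_hasFDerivAt] at hf ⊢
  exact (hh.comp_hasFDerivAt x hf).congr_fderiv (by ext v; simp)

theorem HasGradientAt.sub (hf : HasGradientAt f f' x) (hg : HasGradientAt g g' x) :
    HasGradientAt (fun y => f y - g y) (f' - g') x := by
  rw [hasGradientAt_iff_hasFDerivAt] at hf hg ⊢
  exact (hf.sub hg).congr_fderiv (by ext v; simp)

theorem HasGradientAt.mul (hf : HasGradientAt f f' x) (hg : HasGradientAt g g' x) :
    HasGradientAt (fun y => f y * g y) (f x • g' + g x • f') x := by
  rw [hasGradientAt_iff_hasFDerivAt] at hf hg ⊢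
  exact (hf.mul hg).congr_fderiv (by ext v; simp)

theorem HasGradientAt.div (hf : HasGradientAt f f' x) (hg : HasGradientAt g g' x) (hx : g x ≠ 0) :
    HasGradientAt (fun y => f y / g y) ((g x ^ 2)⁻¹ • (g x • f' - f x • g')) x := by
  have hinv := (hasDerivAt_inv hx).comp_hasGradientAt hg
  convert hf.mul hinv using 1
  · simp [div_eq_mul_inv]
  · match_scalars <;> field_simp

theorem hasGradientAt_inner_sub (ω x₀ x : E) : HasGradientAt (fun y => ⟪ω, y - x₀⟫) ω x := by
  rw [hasGradientAt_iff_hasFDerivAt]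
  exact (((innerSL ℝ ω).hasFDerivAt).comp x ((hasFDerivAt_id x).sub_const x₀)).congr_fderiv
    (by ext v; simp)

theorem hasGradientAt_norm_sub_sq (x₀ x : E) :
    HasGradientAt (fun y => ‖y - x₀‖ ^ 2) ((2 : ℝ) • (x - x₀)) x := by
  rw [hasGradientAt_iff_hasFDerivAt]
  exact ((hasFDerivAt_id x).sub_const x₀).norm_sq.congr_fderiv (by ext v; simp)

end GradientCalculus

section EikonalAlgebra

variable {E : Type*} [NormedAddCommGroup E] [InnerProductSpace ℝ E]

theorem inner_inner_smul_sub_norm_sq_smul (ω u : E) : ⟪u, ⟪ω, u⟫ • u - ‖u‖ ^ 2 • ω⟫ = 0 := by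
  rw [inner_sub_right, real_inner_smul_right, real_inner_smul_right, real_inner_self_eq_norm_sq,
    real_inner_comm]
  ring

theorem norm_inner_smul_sub_norm_sq_smul_sq {ω : E} (hω : ‖ω‖ = 1) (u : E) :
    ‖⟪ω, u⟫ • u - ‖u‖ ^ 2 • ω‖ ^ 2 = ‖u‖ ^ 2 * (‖u‖ ^ 2 - ⟪ω, u⟫ ^ 2) := by
  rw [norm_sub_sq_real, norm_smul, norm_smul, real_inner_smul_left, real_inner_smul_right, hω,
    real_inner_comm]
  simp only [norm_pow, Real.norm_eq_abs, abs_norm, mul_one, mul_pow, sq_abs]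
  ring

end EikonalAlgebra

section Eikonal

variable {E : Type*} [NormedAddCommGroup E] [InnerProductSpace ℝ E] [CompleteSpace E]

theorem hasGradientAt_log_norm_sub {x₀ x : E} (hx : x ≠ x₀) :
    HasGradientAt (fun y => log ‖y - x₀‖) ((‖x - x₀‖ ^ 2)⁻¹ • (x - x₀)) x := by
  have hr : ‖x - x₀‖ ^ 2 ≠ 0 := by have := sub_ne_zero.mpr hx; positivity
  convert ((hasDerivAt_log hr).div_const 2).comp_hasGradientAt (hasGradientAt_norm_sub_sq x₀ x)
    using 1
  · funext y
    simp only [Real.log_pow]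
    push_cast
    ring
  · match_scalars <;> ring

theorem hasGradientAt_pi_div_two_sub_arctan {ω x₀ x : E} (hx : ⟪ω, x - x₀⟫ ^ 2 < ‖x - x₀‖ ^ 2) :
    HasGradientAt (fun y => π / 2 - arctan (⟪ω, y - x₀⟫ / √(‖y - x₀‖ ^ 2 - ⟪ω, y - x₀⟫ ^ 2)))
      ((‖x - x₀‖ ^ 2 * √(‖x - x₀‖ ^ 2 - ⟪ω, x - x₀⟫ ^ 2))⁻¹ •
        (⟪ω, x - x₀⟫ • (x - x₀) - ‖x - x₀‖ ^ 2 • ω)) x := by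
  have hD : 0 < ‖x - x₀‖ ^ 2 - ⟪ω, x - x₀⟫ ^ 2 := sub_pos.mpr hx
  have hS : 0 < √(‖x - x₀‖ ^ 2 - ⟪ω, x - x₀⟫ ^ 2) := sqrt_pos.mpr hD
  have hSsq := sq_sqrt hD.le
  have gradA := hasGradientAt_inner_sub ω x₀ x
  have gradD := (hasGradientAt_norm_sub_sq x₀ x).sub
    ((hasDerivAt_pow 2 _).comp_hasGradientAt gradA)
  have gradS := (hasDerivAt_sqrt hD.ne').comp_hasGradientAt gradD
  have gradQ := gradA.div gradS hS.ne'
  convert ((hasDerivAt_arctan _).const_sub (π / 2)).comp_hasGradientAt gradQ using 1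
  generalize √(‖x - x₀‖ ^ 2 - ⟪ω, x - x₀⟫ ^ 2) = s at hS hSsq ⊢
  generalize ⟪ω, x - x₀⟫ = a at hSsq ⊢
  generalize ‖x - x₀‖ = r at hSsq ⊢
  -- the arctan factor `1 / (1 + (a / s) ^ 2)` is `s ^ 2 / r ^ 2`
  rw [show r ^ 2 = s ^ 2 + a ^ 2 by linarith]
  match_scalars
  all_goals field_simp
  norm_num
  ring

end Eikonal

theorem stmt_2_general (n : ℕ) (x₀ ω : EuclideanSpace ℝ (Fin n)) (hω : ‖ω‖ = 1)
    (x : EuclideanSpace ℝ (Fin n)) (hx : ⟪ω, x - x₀⟫ ^ 2 < ‖x - x₀‖ ^ 2) :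
    ‖gradient (fun y : EuclideanSpace ℝ (Fin n) =>
        Real.pi / 2 - Real.arctan (⟪ω, y - x₀⟫ /
          Real.sqrt (‖y - x₀‖ ^ 2 - ⟪ω, y - x₀⟫ ^ 2))) x‖ ^ 2
      = ‖gradient (fun y : EuclideanSpace ℝ (Fin n) => Real.log ‖y - x₀‖) x‖ ^ 2 ∧
    ⟪gradient (fun y : EuclideanSpace ℝ (Fin n) => Real.log ‖y - x₀‖) x,
      gradient (fun y : EuclideanSpace ℝ (Fin n) =>
        Real.pi / 2 - Real.arctan (⟪ω, y - x₀⟫ /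
          Real.sqrt (‖y - x₀‖ ^ 2 - ⟪ω, y - x₀⟫ ^ 2))) x⟫ = 0 := by
  have hu : x - x₀ ≠ 0 := fun h => by simp [h] at hx
  rw [(hasGradientAt_pi_div_two_sub_arctan hx).gradient,
    (hasGradientAt_log_norm_sub (sub_ne_zero.mp hu)).gradient]
  refine ⟨?_, ?_⟩
  · have hD : 0 < ‖x - x₀‖ ^ 2 - ⟪ω, x - x₀⟫ ^ 2 := sub_pos.mpr hx
    have hs2 := sq_sqrt hD.le
    generalize √(‖x - x₀‖ ^ 2 - ⟪ω, x - x₀⟫ ^ 2) = s at hs2 ⊢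
    have hs : s ≠ 0 := by rintro rfl; simp [hD.ne] at hs2
    rw [norm_smul, norm_smul, mul_pow, mul_pow, norm_inner_smul_sub_norm_sq_smul_sq hω, ← hs2]
    simp only [norm_inv, norm_mul, norm_pow, Real.norm_eq_abs, mul_pow, inv_pow, sq_abs]
    field_simp
  · rw [real_inner_smul_left, real_inner_smul_right, inner_inner_smul_sub_norm_sq_smul, mul_zero,
      mul_zero]

/-- With `φ(x) = log ‖x - x₀‖` and
`ψ(x) = π/2 - arctan( ω·(x-x₀) / √(‖x-x₀‖² - (ω·(x-x₀))²) )`, on the open set where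
`‖x - x₀‖² > (ω·(x-x₀))²` one has `‖∇ψ‖² = ‖∇φ‖²` and `∇φ·∇ψ = 0`. -/
theorem stmt_2 (n : ℕ) (hn : 2 ≤ n) (x₀ ω : EuclideanSpace ℝ (Fin n)) (hω : ‖ω‖ = 1)
    (x : EuclideanSpace ℝ (Fin n)) (hx : ⟪ω, x - x₀⟫ ^ 2 < ‖x - x₀‖ ^ 2) :
    ‖gradient (fun y : EuclideanSpace ℝ (Fin n) =>
        Real.pi / 2 - Real.arctan (⟪ω, y - x₀⟫ /
          Real.sqrt (‖y - x₀‖ ^ 2 - ⟪ω, y - x₀⟫ ^ 2))) x‖ ^ 2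
      = ‖gradient (fun y : EuclideanSpace ℝ (Fin n) => Real.log ‖y - x₀‖) x‖ ^ 2 ∧
    ⟪gradient (fun y : EuclideanSpace ℝ (Fin n) => Real.log ‖y - x₀‖) x,
      gradient (fun y : EuclideanSpace ℝ (Fin n) =>
        Real.pi / 2 - Real.arctan (⟪ω, y - x₀⟫ /
          Real.sqrt (‖y - x₀‖ ^ 2 - ⟪ω, y - x₀⟫ ^ 2))) x⟫ = 0 :=
  stmt_2_general n x₀ ω hω x hx
end

section
/- Let u(x;h) = e^{(φ+iψ)/h}(a₀ + h a₁ + r) and suppose φ, ψ satisfy the eikonal equations. Then h⁴ e^{-(φ+iψ)/h} ℒ_{A,q}(e^{(φ+iψ)/h}(a₀ + h a₁)) = h² (2T)² a₀ + h³ [ (2T)² a₁ + (Δ∘(2T) + (2T)∘Δ) a₀/1 + A·(Dφ + iDψ) a₀ ] + O(h⁴) terms, in the sense that if a₀ satisfies T²a₀ = 0 and a₁ satisfies T²a₁ = -(1/2)(Δ∘T + T∘Δ)a₀ - (1/4) A·(Dφ + iDψ) a₀, then e^{-(φ+iψ)/h} h⁴ ℒ_{A,q}(e^{(φ+iψ)/h}(a₀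 + ha₁)) = O(h⁴) in L²(Ω). -/
open Complex MeasureTheory

variable {n : ℕ}

/-- Partial derivative `∂ᵢ f` of a complex-valued function on `ℝⁿ`. -/
noncomputable def pd (i : Fin n) (f : EuclideanSpace ℝ (Fin n) → ℂ)
    (x : EuclideanSpace ℝ (Fin n)) : ℂ :=
  fderiv ℝ f x (EuclideanSpace.single i 1)

/-- Partial derivative `∂ᵢ f` of a real-valued function on `ℝⁿ`. -/
noncomputable def pdR (i : Fin n) (f : EuclideanSpace ℝ (Fin n) → ℝ)
    (x : EuclideanSpace ℝ (Fin n)) : ℝ :=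
  fderiv ℝ f x (EuclideanSpace.single i 1)

/-- The Laplacian of a complex-valued function. -/
noncomputable def lap (f : EuclideanSpace ℝ (Fin n) → ℂ)
    (x : EuclideanSpace ℝ (Fin n)) : ℂ :=
  ∑ i : Fin n, pd i (pd i f) x

/-- The Laplacian of a real-valued function. -/
noncomputable def lapR (f : EuclideanSpace ℝ (Fin n) → ℝ)
    (x : EuclideanSpace ℝ (Fin n)) : ℝ :=
  ∑ i : Fin n, pdR i (pdR i f) x

/-- The transport operator `T = (∇φ + i∇ψ)·∇ + (Δφ + iΔψ)/2`. -/
noncomputable def Tt (φ ψ : EuclideanSpace ℝ (Fin n) → ℝ)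
    (u : EuclideanSpace ℝ (Fin n) → ℂ) (x : EuclideanSpace ℝ (Fin n)) : ℂ :=
  (∑ i : Fin n, ((pdR i φ x : ℂ) + I * (pdR i ψ x : ℂ)) * pd i u x)
    + (((lapR φ x : ℂ) + I * (lapR ψ x : ℂ)) / 2) * u x

/-- The operator `ℒ_{A,q} u = Δ²u + A·Du + qu`, `D = -i∇`. -/
noncomputable def LAq (A : EuclideanSpace ℝ (Fin n) → Fin n → ℂ)
    (q : EuclideanSpace ℝ (Fin n) → ℂ) (u : EuclideanSpace ℝ (Fin n) → ℂ)
    (x : EuclideanSpace ℝ (Fin n)) : ℂ :=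
  lap (lap u) x + (∑ i : Fin n, A x i * (-I * pd i u x)) + q x * u x

/-! ### Auxiliary lemmas -/

lemma pd_add {f g : EuclideanSpace ℝ (Fin n) → ℂ} {x} (i : Fin n)
    (hf : DifferentiableAt ℝ f x) (hg : DifferentiableAt ℝ g x) :
    pd i (fun y => f y + g y) x = pd i f x + pd i g x := by
  simp [pd, fderiv_fun_add hf hg]

lemma pd_const_mul {f : EuclideanSpace ℝ (Fin n) → ℂ} {x} (i : Fin n) (c : ℂ)
    (hf : DifferentiableAt ℝ f x) :
    pd i (fun y => c * f y) x = c * pd i f x := by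
  simp [pd, fderiv_const_mul hf c]

lemma pd_mul {f g : EuclideanSpace ℝ (Fin n) → ℂ} {x} (i : Fin n)
    (hf : DifferentiableAt ℝ f x) (hg : DifferentiableAt ℝ g x) :
    pd i (fun y => f y * g y) x = pd i f x * g x + f x * pd i g x := by
  simp [pd, fderiv_fun_mul hf hg]; ring

lemma pd_div_const {f : EuclideanSpace ℝ (Fin n) → ℂ} {x} (i : Fin n) (c : ℂ)
    (hf : DifferentiableAt ℝ f x) :
    pd i (fun y => f y / c) x = pd i f x / c := by
  simp only [div_eq_mul_inv]
  simp [pd, fderiv_mul_const hf c⁻¹]; ring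

lemma contDiff_pd {m k : WithTop ℕ∞} {f : EuclideanSpace ℝ (Fin n) → ℂ}
    (hf : ContDiff ℝ k f) (hmk : m + 1 ≤ k) (i : Fin n) :
    ContDiff ℝ m (pd i f) :=
  (ContinuousLinearMap.apply ℝ ℂ (EuclideanSpace.single i (1:ℝ))).contDiff.comp
    (hf.fderiv_right hmk)

lemma contDiff_pdR {m k : WithTop ℕ∞} {f : EuclideanSpace ℝ (Fin n) → ℝ}
    (hf : ContDiff ℝ k f) (hmk : m + 1 ≤ k) (i : Fin n) :
    ContDiff ℝ m (pdR i f) :=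
  (ContinuousLinearMap.apply ℝ ℝ (EuclideanSpace.single i (1:ℝ))).contDiff.comp
    (hf.fderiv_right hmk)

lemma pd_ofReal {g : EuclideanSpace ℝ (Fin n) → ℝ} {x} (i : Fin n)
    (hg : DifferentiableAt ℝ g x) :
    pd i (fun y => ((g y : ℝ) : ℂ)) x = (pdR i g x : ℂ) := by
  have h1 : HasFDerivAt (fun y => ((g y : ℝ) : ℂ))
      (Complex.ofRealCLM.comp (fderiv ℝ g x)) x :=
    Complex.ofRealCLM.hasFDerivAt.comp x hg.hasFDerivAt
  simp [pd, pdR, h1.fderiv]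

lemma pd_cexp {f : EuclideanSpace ℝ (Fin n) → ℂ} {x} (i : Fin n)
    (hf : DifferentiableAt ℝ f x) :
    pd i (fun y => Complex.exp (f y)) x = Complex.exp (f x) * pd i f x := by
  simp [pd, (hf.hasFDerivAt.cexp).fderiv]

lemma contDiff_lap {m k : WithTop ℕ∞} {f : EuclideanSpace ℝ (Fin n) → ℂ}
    (hf : ContDiff ℝ k f) (hmk : m + 2 ≤ k) : ContDiff ℝ m (lap f) := by
  have h1 : ∀ i : Fin n, ContDiff ℝ (m+1) (pd i f) :=
    contDiff_pd hf (by rwa [← one_add_one_eq_two, ← add_assoc] at hmk)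
  exact ContDiff.sum fun i _ => contDiff_pd (h1 i) le_rfl i

lemma contDiff_lapR {m k : WithTop ℕ∞} {f : EuclideanSpace ℝ (Fin n) → ℝ}
    (hf : ContDiff ℝ k f) (hmk : m + 2 ≤ k) : ContDiff ℝ m (lapR f) := by
  have h1 : ∀ i : Fin n, ContDiff ℝ (m+1) (pdR i f) :=
    contDiff_pdR hf (by rwa [← one_add_one_eq_two, ← add_assoc] at hmk)
  exact ContDiff.sum fun i _ => contDiff_pdR (h1 i) le_rfl i

lemma contDiff_ofReal {k : WithTop ℕ∞} {g : EuclideanSpace ℝ (Fin n) → ℝ}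
    (hg : ContDiff ℝ k g) : ContDiff ℝ k (fun y => ((g y : ℝ) : ℂ)) :=
  Complex.ofRealCLM.contDiff.comp hg

lemma contDiff_Tt {m k : WithTop ℕ∞} {φ ψ : EuclideanSpace ℝ (Fin n) → ℝ}
    (hφ : ContDiff ℝ (⊤ : ℕ∞) φ) (hψ : ContDiff ℝ (⊤ : ℕ∞) ψ)
    {f : EuclideanSpace ℝ (Fin n) → ℂ} (hf : ContDiff ℝ k f) (hmk : m + 1 ≤ k)
    (hmt : m ≤ ((⊤ : ℕ∞) : WithTop ℕ∞) := by exact WithTop.coe_le_coe.2 le_top) :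
    ContDiff ℝ m (Tt φ ψ f) := by
  have hm1 : m ≤ k := le_trans le_self_add hmk
  have hc : ∀ i : Fin n, ContDiff ℝ m
      (fun x => ((pdR i φ x : ℂ) + I * (pdR i ψ x : ℂ)) * pd i f x) := fun i =>
    (((contDiff_ofReal (contDiff_pdR hφ (by exact WithTop.coe_le_coe.2 le_top) i)).of_le hmt).add
      (contDiff_const.mul ((contDiff_ofReal (contDiff_pdR hψ (by exact WithTop.coe_le_coe.2 le_top) i)).of_le hmt))).mul
      (contDiff_pd hf hmk i)
  exact (ContDiff.sum fun i _ => hc i).add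
    ((((((contDiff_ofReal (contDiff_lapR hφ (by exact WithTop.coe_le_coe.2 le_top))).of_le hmt).add
      (contDiff_const.mul ((contDiff_ofReal (contDiff_lapR hψ (by exact WithTop.coe_le_coe.2 le_top))).of_le hmt))).div_const 2)).mul
      (hf.of_le hm1))

lemma Tt_add_mul {φ ψ : EuclideanSpace ℝ (Fin n) → ℝ}
    {f g : EuclideanSpace ℝ (Fin n) → ℂ} {x} (c : ℂ)
    (hf : DifferentiableAt ℝ f x) (hg : DifferentiableAt ℝ g x) :
    Tt φ ψ (fun y => f y + c * g y) x = Tt φ ψ f x + c * Tt φ ψ g x := by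
  have h1 : ∀ i : Fin n, pd i (fun y => f y + c * g y) x = pd i f x + c * pd i g x :=
    fun i => by rw [pd_add i hf (hg.const_mul c), pd_const_mul i c hg]
  unfold Tt
  simp only [h1]
  have h2 : ∑ i : Fin n, ((pdR i φ x : ℂ) + I * (pdR i ψ x : ℂ)) * (pd i f x + c * pd i g x)
      = (∑ i : Fin n, ((pdR i φ x : ℂ) + I * (pdR i ψ x : ℂ)) * pd i f x)
        + c * ∑ i : Fin n, ((pdR i φ x : ℂ) + I * (pdR i ψ x : ℂ)) * pd i g x := by
    rw [Finset.mul_sum, ← Finset.sum_add_distrib]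
    exact Finset.sum_congr rfl fun i _ => by ring
  rw [h2]; ring

lemma lap_add_mul {f g : EuclideanSpace ℝ (Fin n) → ℂ} {x} (c : ℂ)
    (hf : ContDiff ℝ 2 f) (hg : ContDiff ℝ 2 g) :
    lap (fun y => f y + c * g y) x = lap f x + c * lap g x := by
  have hfd : Differentiable ℝ f := hf.differentiable (by norm_num)
  have hgd : Differentiable ℝ g := hg.differentiable (by norm_num)
  have hfd1 : ∀ i : Fin n, DifferentiableAt ℝ (pd i f) x := fun i =>
    ((contDiff_pd (m := 1) hf (by norm_num) i).differentiable one_ne_zero).differentiableAt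
  have hgd1 : ∀ i : Fin n, DifferentiableAt ℝ (pd i g) x := fun i =>
    ((contDiff_pd (m := 1) hg (by norm_num) i).differentiable one_ne_zero).differentiableAt
  have h1 : ∀ i : Fin n, pd i (fun y => f y + c * g y) = fun y => pd i f y + c * pd i g y :=
    fun i => funext fun y => by
      rw [pd_add i (hfd y) ((hgd y).const_mul c), pd_const_mul i c (hgd y)]
  unfold lap
  simp only [h1]
  have h2 : ∀ i : Fin n, pd i (fun y => pd i f y + c * pd i g y) x
      = pd i (pd i f) x + c * pd i (pd i g) x := fun i => by
    rw [pd_add i (hfd1 i) ((hgd1 i).const_mul c), pd_const_mul i c (hgd1 i)]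
  simp only [h2]
  rw [Finset.sum_add_distrib, ← Finset.mul_sum]

noncomputable def Phi (φ ψ : EuclideanSpace ℝ (Fin n) → ℝ)
    (y : EuclideanSpace ℝ (Fin n)) : ℂ := (φ y : ℂ) + I * (ψ y : ℂ)

noncomputable def Ee (φ ψ : EuclideanSpace ℝ (Fin n) → ℝ) (h : ℝ)
    (y : EuclideanSpace ℝ (Fin n)) : ℂ := Complex.exp (Phi φ ψ y / h)

variable {φ ψ : EuclideanSpace ℝ (Fin n) → ℝ}

lemma contDiff_Phi (hφ : ContDiff ℝ (⊤ : ℕ∞) φ) (hψ : ContDiff ℝ (⊤ : ℕ∞) ψ) : ContDiff ℝ (⊤ : ℕ∞) (Phi φ ψ) :=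
  (contDiff_ofReal hφ).add (contDiff_const.mul (contDiff_ofReal hψ))

lemma contDiff_Ee (hφ : ContDiff ℝ (⊤ : ℕ∞) φ) (hψ : ContDiff ℝ (⊤ : ℕ∞) ψ) (h : ℝ) : ContDiff ℝ (⊤ : ℕ∞) (Ee φ ψ h) :=
  ((contDiff_Phi hφ hψ).div_const h).cexp

lemma pd_Phi (hφ : ContDiff ℝ (⊤ : ℕ∞) φ) (hψ : ContDiff ℝ (⊤ : ℕ∞) ψ) (i : Fin n) (x) :
    pd i (Phi φ ψ) x = (pdR i φ x : ℂ) + I * (pdR i ψ x : ℂ) := by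
  have hφd := (hφ.differentiable (by simp)) x
  have hψd := (hψ.differentiable (by simp)) x
  have heq : Phi φ ψ = fun y => ((φ y : ℝ) : ℂ) + I * ((ψ y : ℝ) : ℂ) := rfl
  rw [heq, pd_add i ((contDiff_ofReal hφ).differentiable (by simp) x)
      (((contDiff_ofReal hψ).differentiable (by simp) x).const_mul I),
    pd_const_mul i I ((contDiff_ofReal hψ).differentiable (by simp) x),
    pd_ofReal i hφd, pd_ofReal i hψd]

lemma pd_Ee (hφ : ContDiff ℝ (⊤ : ℕ∞) φ) (hψ : ContDiff ℝ (⊤ : ℕ∞) ψ) (h : ℝ) (i : Fin n) (x) :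
    pd i (Ee φ ψ h) x = Ee φ ψ h x * (pd i (Phi φ ψ) x / h) := by
  have hd : DifferentiableAt ℝ (fun y => Phi φ ψ y / (h:ℂ)) x := by
    simp only [div_eq_mul_inv]
    exact ((contDiff_Phi hφ hψ).differentiable (by simp) x).mul_const _
  have heq : Ee φ ψ h = fun y => Complex.exp (Phi φ ψ y / h) := rfl
  rw [heq, pd_cexp i hd, pd_div_const i _ ((contDiff_Phi hφ hψ).differentiable (by simp) x)]

lemma conj_pd (hφ : ContDiff ℝ (⊤ : ℕ∞) φ) (hψ : ContDiff ℝ (⊤ : ℕ∞) ψ) (h : ℝ)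
    {f : EuclideanSpace ℝ (Fin n) → ℂ} {x} (i : Fin n)
    (hf : DifferentiableAt ℝ f x) :
    pd i (fun y => Ee φ ψ h y * f y) x
      = Ee φ ψ h x * (pd i (Phi φ ψ) x / h * f x + pd i f x) := by
  rw [pd_mul i (((contDiff_Ee hφ hψ h).differentiable (by simp)) x) hf, pd_Ee hφ hψ h i x]
  ring

lemma sum_sq_pdPhi (hφ : ContDiff ℝ (⊤ : ℕ∞) φ) (hψ : ContDiff ℝ (⊤ : ℕ∞) ψ)
    (heik : ∀ x, (∑ i : Fin n, (pdR i ψ x) ^ 2) = (∑ i : Fin n, (pdR i φ x) ^ 2) ∧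
      (∑ i : Fin n, (pdR i φ x) * (pdR i ψ x)) = 0) (x) :
    ∑ i : Fin n, (pd i (Phi φ ψ) x) ^ 2 = 0 := by
  obtain ⟨e1, e2⟩ := heik x
  calc ∑ i : Fin n, (pd i (Phi φ ψ) x) ^ 2
      = ∑ i : Fin n, (((pdR i φ x : ℂ))^2 - ((pdR i ψ x : ℂ))^2
          + 2 * I * ((pdR i φ x : ℂ) * (pdR i ψ x : ℂ))) :=
        Finset.sum_congr rfl fun i _ => by
          rw [pd_Phi hφ hψ i x]
          linear_combination ((pdR i ψ x : ℂ))^2 * Complex.I_sq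
    _ = ((∑ i : Fin n, (pdR i φ x)^2 : ℝ) : ℂ) - ((∑ i : Fin n, (pdR i ψ x)^2 : ℝ) : ℂ)
          + 2 * I * ((∑ i : Fin n, pdR i φ x * pdR i ψ x : ℝ) : ℂ) := by
        push_cast
        rw [Finset.sum_add_distrib, Finset.sum_sub_distrib, Finset.mul_sum]
    _ = 0 := by rw [e1, e2]; push_cast; ring

lemma sum_pd_pd_Phi (hφ : ContDiff ℝ (⊤ : ℕ∞) φ) (hψ : ContDiff ℝ (⊤ : ℕ∞) ψ) (x) :
    ∑ i : Fin n, pd i (pd i (Phi φ ψ)) x = ((lapR φ x : ℂ)) + I * ((lapR ψ x : ℂ)) := by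
  have hstep : ∀ i : Fin n, pd i (pd i (Phi φ ψ)) x
      = ((pdR i (pdR i φ) x : ℂ)) + I * ((pdR i (pdR i ψ) x : ℂ)) := by
    intro i
    have hφ1 : ContDiff ℝ (⊤ : ℕ∞) (pdR i φ) := contDiff_pdR hφ (by simp) i
    have hψ1 : ContDiff ℝ (⊤ : ℕ∞) (pdR i ψ) := contDiff_pdR hψ (by simp) i
    rw [show pd i (Phi φ ψ) = fun y => ((pdR i φ y : ℝ) : ℂ) + I * ((pdR i ψ y : ℝ) : ℂ)
      from funext (pd_Phi hφ hψ i)]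
    rw [pd_add i ((contDiff_ofReal hφ1).differentiable (by simp) x)
        (((contDiff_ofReal hψ1).differentiable (by simp) x).const_mul I),
      pd_const_mul i I ((contDiff_ofReal hψ1).differentiable (by simp) x),
      pd_ofReal i (hφ1.differentiable (by simp) x), pd_ofReal i (hψ1.differentiable (by simp) x)]
  rw [Finset.sum_congr rfl fun i _ => hstep i]
  unfold lapR
  push_cast
  rw [Finset.sum_add_distrib, Finset.mul_sum]

lemma conj_lap (hφ : ContDiff ℝ (⊤ : ℕ∞) φ) (hψ : ContDiff ℝ (⊤ : ℕ∞) ψ)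
    (heik : ∀ x, (∑ i : Fin n, (pdR i ψ x) ^ 2) = (∑ i : Fin n, (pdR i φ x) ^ 2) ∧
      (∑ i : Fin n, (pdR i φ x) * (pdR i ψ x)) = 0)
    (h : ℝ) (hh : h ≠ 0) {f : EuclideanSpace ℝ (Fin n) → ℂ} (hf : ContDiff ℝ 2 f) (x) :
    lap (fun y => Ee φ ψ h y * f y) x
      = Ee φ ψ h x * ((2 / (h:ℂ)) * Tt φ ψ f x + lap f x) := by
  have hh' : (h:ℂ) ≠ 0 := Complex.ofReal_ne_zero.2 hh
  have hfd : Differentiable ℝ f := hf.differentiable (by norm_num)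
  have hpdf : ∀ i : Fin n, ContDiff ℝ 1 (pd i f) := contDiff_pd hf (by norm_num)
  have hpdΦ : ∀ i : Fin n, Differentiable ℝ (pd i (Phi φ ψ)) := fun i =>
    (contDiff_pd (m := (⊤ : ℕ∞)) (contDiff_Phi hφ hψ) (by simp) i).differentiable (by simp)
  have d1 : ∀ i : Fin n, ∀ y, DifferentiableAt ℝ (fun y => pd i (Phi φ ψ) y / (h:ℂ)) y := by
    intro i y
    simp only [div_eq_mul_inv]
    exact ((hpdΦ i) y).mul_const _
  have step1 : ∀ i : Fin n, pd i (fun y => Ee φ ψ h y * f y)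
      = fun y => Ee φ ψ h y * (pd i (Phi φ ψ) y / h * f y + pd i f y) := fun i =>
    funext fun y => conj_pd hφ hψ h i (hfd y)
  have hgd : ∀ i : Fin n, DifferentiableAt ℝ
      (fun y => pd i (Phi φ ψ) y / (h:ℂ) * f y + pd i f y) x := fun i =>
    ((d1 i x).mul (hfd x)).add ((hpdf i).differentiable (by norm_num) x)
  have step2 : ∀ i : Fin n, pd i (fun y => Ee φ ψ h y *
        (pd i (Phi φ ψ) y / h * f y + pd i f y)) x
      = Ee φ ψ h x * (pd i (Phi φ ψ) x / h *
          (pd i (Phi φ ψ) x / h * f x + pd i f x)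
        + pd i (fun y => pd i (Phi φ ψ) y / h * f y + pd i f y) x) := fun i =>
    conj_pd hφ hψ h i (hgd i)
  have step3 : ∀ i : Fin n, pd i (fun y => pd i (Phi φ ψ) y / h * f y + pd i f y) x
      = pd i (pd i (Phi φ ψ)) x / h * f x + pd i (Phi φ ψ) x / h * pd i f x
        + pd i (pd i f) x := by
    intro i
    rw [pd_add (f := fun y => pd i (Phi φ ψ) y / (h:ℂ) * f y) i ((d1 i x).mul (hfd x)) ((hpdf i).differentiable (by norm_num) x),
      pd_mul i (d1 i x) (hfd x), pd_div_const i _ ((hpdΦ i) x)]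
  calc lap (fun y => Ee φ ψ h y * f y) x
      = ∑ i : Fin n, Ee φ ψ h x * (pd i (Phi φ ψ) x / h *
            (pd i (Phi φ ψ) x / h * f x + pd i f x)
          + (pd i (pd i (Phi φ ψ)) x / h * f x + pd i (Phi φ ψ) x / h * pd i f x
            + pd i (pd i f) x)) := by
        unfold lap
        exact Finset.sum_congr rfl fun i _ => by rw [step1 i, step2 i, step3 i]
    _ = Ee φ ψ h x * ((∑ i : Fin n, (pd i (Phi φ ψ) x)^2) * (f x / (h:ℂ)^2)
          + (∑ i : Fin n, pd i (Phi φ ψ) x * pd i f x) * (2 / (h:ℂ))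
          + (∑ i : Fin n, pd i (pd i (Phi φ ψ)) x) * (f x / (h:ℂ))
          + ∑ i : Fin n, pd i (pd i f) x) := by
        rw [← Finset.mul_sum]
        congr 1
        rw [Finset.sum_mul, Finset.sum_mul, Finset.sum_mul, ← Finset.sum_add_distrib,
          ← Finset.sum_add_distrib, ← Finset.sum_add_distrib]
        exact Finset.sum_congr rfl fun i _ => by field_simp; ring
    _ = Ee φ ψ h x * ((2 / (h:ℂ)) * Tt φ ψ f x + lap f x) := by
        rw [sum_sq_pdPhi hφ hψ heik x, sum_pd_pd_Phi hφ hψ x,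
          Finset.sum_congr rfl fun (i : Fin n) _ => by rw [pd_Phi hφ hψ i x]]
        unfold Tt lap
        field_simp
        ring

lemma Tt_mul_add {f g : EuclideanSpace ℝ (Fin n) → ℂ} {x} (c : ℂ)
    (hf : DifferentiableAt ℝ f x) (hg : DifferentiableAt ℝ g x) :
    Tt φ ψ (fun y => c * f y + g y) x = c * Tt φ ψ f x + Tt φ ψ g x := by
  rw [show (fun y => c * f y + g y) = fun y => g y + c * f y from funext fun y => add_comm _ _,
    Tt_add_mul c hg hf]
  ring

lemma lap_mul_add {f g : EuclideanSpace ℝ (Fin n) → ℂ} {x} (c : ℂ)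
    (hf : ContDiff ℝ 2 f) (hg : ContDiff ℝ 2 g) :
    lap (fun y => c * f y + g y) x = c * lap f x + lap g x := by
  rw [show (fun y => c * f y + g y) = fun y => g y + c * f y from funext fun y => add_comm _ _,
    lap_add_mul c hg hf]
  ring

lemma conj_laplap (hφ : ContDiff ℝ (⊤ : ℕ∞) φ) (hψ : ContDiff ℝ (⊤ : ℕ∞) ψ)
    (heik : ∀ x, (∑ i : Fin n, (pdR i ψ x) ^ 2) = (∑ i : Fin n, (pdR i φ x) ^ 2) ∧
      (∑ i : Fin n, (pdR i φ x) * (pdR i ψ x)) = 0)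
    (h : ℝ) (hh : h ≠ 0) {f : EuclideanSpace ℝ (Fin n) → ℂ} (hf : ContDiff ℝ 4 f) (x) :
    lap (lap (fun y => Ee φ ψ h y * f y)) x
      = Ee φ ψ h x * ((4 / (h:ℂ)^2) * Tt φ ψ (Tt φ ψ f) x
          + (2 / (h:ℂ)) * (Tt φ ψ (fun y => lap f y) x + lap (Tt φ ψ f) x)
          + lap (lap f) x) := by
  have hh' : (h:ℂ) ≠ 0 := Complex.ofReal_ne_zero.2 hh
  have hT : ContDiff ℝ 3 (Tt φ ψ f) := contDiff_Tt hφ hψ hf (by norm_num)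
  have hl : ContDiff ℝ 2 (lap f) := contDiff_lap hf (by norm_num)
  have hw : ContDiff ℝ 2 (fun y => (2 / (h:ℂ)) * Tt φ ψ f y + lap f y) :=
    (contDiff_const.mul (hT.of_le (by norm_num))).add hl
  have e1 : lap (fun y => Ee φ ψ h y * f y)
      = fun y => Ee φ ψ h y * ((2 / (h:ℂ)) * Tt φ ψ f y + lap f y) :=
    funext fun y => conj_lap hφ hψ heik h hh (hf.of_le (by norm_num)) y
  rw [show lap (lap (fun y => Ee φ ψ h y * f y)) x
      = lap (fun y => Ee φ ψ h y * ((2 / (h:ℂ)) * Tt φ ψ f y + lap f y)) x from by rw [e1]]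
  rw [conj_lap hφ hψ heik h hh hw x]
  have eT : Tt φ ψ (fun y => (2 / (h:ℂ)) * Tt φ ψ f y + lap f y) x
      = (2 / (h:ℂ)) * Tt φ ψ (Tt φ ψ f) x + Tt φ ψ (fun y => lap f y) x :=
    Tt_mul_add (g := fun y => lap f y) _ (hT.differentiable (by norm_num) x)
      (hl.differentiable (by norm_num) x)
  have eL : lap (fun y => (2 / (h:ℂ)) * Tt φ ψ f y + lap f y) x
      = (2 / (h:ℂ)) * lap (Tt φ ψ f) x + lap (lap f) x :=
    lap_mul_add _ (hT.of_le (by norm_num)) hl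
  rw [eT, eL]
  field_simp
  ring

noncomputable def Pfun (φ ψ : EuclideanSpace ℝ (Fin n) → ℝ)
    (A : EuclideanSpace ℝ (Fin n) → Fin n → ℂ) (q : EuclideanSpace ℝ (Fin n) → ℂ)
    (a₀ a₁ : EuclideanSpace ℝ (Fin n) → ℂ) (x : EuclideanSpace ℝ (Fin n)) : ℂ :=
  2 * (Tt φ ψ (fun y => lap a₁ y) x + lap (Tt φ ψ a₁) x) + lap (lap a₀) x
    + (∑ i : Fin n, A x i * (-I * (pdR i φ x : ℂ) + I * (-I * (pdR i ψ x : ℂ)))) * a₁ x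
    + (∑ i : Fin n, A x i * (-I * pd i a₀ x)) + q x * a₀ x

noncomputable def Qfun (A : EuclideanSpace ℝ (Fin n) → Fin n → ℂ)
    (q : EuclideanSpace ℝ (Fin n) → ℂ) (a₁ : EuclideanSpace ℝ (Fin n) → ℂ)
    (x : EuclideanSpace ℝ (Fin n)) : ℂ :=
  lap (lap a₁) x + (∑ i : Fin n, A x i * (-I * pd i a₁ x)) + q x * a₁ x

lemma key (hφ : ContDiff ℝ (⊤ : ℕ∞) φ) (hψ : ContDiff ℝ (⊤ : ℕ∞) ψ)
    (heik : ∀ x, (∑ i : Fin n, (pdR i ψ x) ^ 2) = (∑ i : Fin n, (pdR i φ x) ^ 2) ∧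
      (∑ i : Fin n, (pdR i φ x) * (pdR i ψ x)) = 0)
    (A : EuclideanSpace ℝ (Fin n) → Fin n → ℂ) (q : EuclideanSpace ℝ (Fin n) → ℂ)
    {a₀ a₁ : EuclideanSpace ℝ (Fin n) → ℂ}
    (ha₀ : ContDiff ℝ (⊤ : ℕ∞) a₀) (ha₁ : ContDiff ℝ 4 a₁)
    (h : ℝ) (hh : h ≠ 0) (x : EuclideanSpace ℝ (Fin n))
    (h1 : Tt φ ψ (Tt φ ψ a₀) x = 0)
    (h2 : Tt φ ψ (Tt φ ψ a₁) x
      = -(1 / 2 : ℂ) * (lap (Tt φ ψ a₀) x + Tt φ ψ (fun y => lap a₀ y) x)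
        - (1 / 4 : ℂ) * (∑ i : Fin n,
            A x i * (-I * (pdR i φ x : ℂ) + I * (-I * (pdR i ψ x : ℂ)))) * a₀ x) :
    Complex.exp (-(Phi φ ψ x) / h)
        * ((h:ℂ)^4 * LAq A q (fun y => Ee φ ψ h y * (a₀ y + (h:ℂ) * a₁ y)) x)
      = (h:ℂ)^4 * (Pfun φ ψ A q a₀ a₁ x + (h:ℂ) * Qfun A q a₁ x) := by
  have hh' : (h:ℂ) ≠ 0 := Complex.ofReal_ne_zero.2 hh
  have ha₀4 : ContDiff ℝ 4 a₀ := ha₀.of_le (by exact WithTop.coe_le_coe.2 le_top)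
  have hv : ContDiff ℝ 4 (fun y => a₀ y + (h:ℂ) * a₁ y) := ha₀4.add (contDiff_const.mul ha₁)
  have hvd : Differentiable ℝ (fun y => a₀ y + (h:ℂ) * a₁ y) := hv.differentiable (by norm_num)
  have hda₀ : Differentiable ℝ a₀ := ha₀.differentiable (by simp)
  have hda₁ : Differentiable ℝ a₁ := ha₁.differentiable (by norm_num)
  have hTa₀C : ContDiff ℝ 2 (Tt φ ψ a₀) := contDiff_Tt hφ hψ ha₀ (by exact WithTop.coe_le_coe.2 le_top)
  have hTa₁C : ContDiff ℝ 2 (Tt φ ψ a₁) := contDiff_Tt hφ hψ ha₁ (by norm_num)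
  have hla₀C : ContDiff ℝ 2 (lap a₀) := contDiff_lap ha₀ (by exact WithTop.coe_le_coe.2 le_top)
  have hla₁C : ContDiff ℝ 2 (lap a₁) := contDiff_lap ha₁ (by norm_num)
  have hs0 : ∀ y, Tt φ ψ (fun z => a₀ z + (h:ℂ) * a₁ z) y
      = Tt φ ψ a₀ y + (h:ℂ) * Tt φ ψ a₁ y := fun y => Tt_add_mul _ (hda₀ y) (hda₁ y)
  have hl0 : ∀ y, lap (fun z => a₀ z + (h:ℂ) * a₁ z) y = lap a₀ y + (h:ℂ) * lap a₁ y :=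
    fun y => lap_add_mul _ (ha₀.of_le (by exact WithTop.coe_le_coe.2 le_top)) (ha₁.of_le (by norm_num))
  have hs1 : Tt φ ψ (Tt φ ψ (fun z => a₀ z + (h:ℂ) * a₁ z)) x
      = Tt φ ψ (Tt φ ψ a₀) x + (h:ℂ) * Tt φ ψ (Tt φ ψ a₁) x := by
    rw [show Tt φ ψ (fun z => a₀ z + (h:ℂ) * a₁ z)
        = fun y => Tt φ ψ a₀ y + (h:ℂ) * Tt φ ψ a₁ y from funext hs0]
    exact Tt_add_mul _ (hTa₀C.differentiable (by norm_num) x)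
      (hTa₁C.differentiable (by norm_num) x)
  have hs2 : Tt φ ψ (fun y => lap (fun z => a₀ z + (h:ℂ) * a₁ z) y) x
      = Tt φ ψ (fun y => lap a₀ y) x + (h:ℂ) * Tt φ ψ (fun y => lap a₁ y) x := by
    rw [show (fun y => lap (fun z => a₀ z + (h:ℂ) * a₁ z) y)
        = fun y => lap a₀ y + (h:ℂ) * lap a₁ y from funext hl0]
    exact Tt_add_mul (f := fun y => lap a₀ y) (g := fun y => lap a₁ y) _
      (hla₀C.differentiable (by norm_num) x) (hla₁C.differentiable (by norm_num) x)
  have hs3 : lap (Tt φ ψ (fun z => a₀ z + (h:ℂ) * a₁ z)) x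
      = lap (Tt φ ψ a₀) x + (h:ℂ) * lap (Tt φ ψ a₁) x := by
    rw [show Tt φ ψ (fun z => a₀ z + (h:ℂ) * a₁ z)
        = fun y => Tt φ ψ a₀ y + (h:ℂ) * Tt φ ψ a₁ y from funext hs0]
    exact lap_add_mul (f := Tt φ ψ a₀) (g := Tt φ ψ a₁) _ hTa₀C hTa₁C
  have hs4 : lap (lap (fun z => a₀ z + (h:ℂ) * a₁ z)) x
      = lap (lap a₀) x + (h:ℂ) * lap (lap a₁) x := by
    rw [show lap (fun z => a₀ z + (h:ℂ) * a₁ z)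
        = fun y => lap a₀ y + (h:ℂ) * lap a₁ y from funext hl0]
    exact lap_add_mul (f := lap a₀) (g := lap a₁) _ hla₀C hla₁C
  have hs5 : ∀ i : Fin n, pd i (fun z => a₀ z + (h:ℂ) * a₁ z) x
      = pd i a₀ x + (h:ℂ) * pd i a₁ x := fun i => by
    rw [pd_add i (hda₀ x) ((hda₁ x).const_mul _), pd_const_mul i _ (hda₁ x)]
  have hEx : Complex.exp (-(Phi φ ψ x) / h) * Ee φ ψ h x = 1 := by
    rw [show Ee φ ψ h x = Complex.exp (Phi φ ψ x / h) from rfl, ← Complex.exp_add,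
      show -(Phi φ ψ x) / h + Phi φ ψ x / h = 0 from by ring]
    exact Complex.exp_zero
  have hlap2 : lap (lap (fun y => Ee φ ψ h y * (a₀ y + (h:ℂ) * a₁ y))) x
      = Ee φ ψ h x * ((4 / (h:ℂ)^2) * Tt φ ψ (Tt φ ψ (fun z => a₀ z + (h:ℂ) * a₁ z)) x
          + (2 / (h:ℂ)) * (Tt φ ψ (fun y => lap (fun z => a₀ z + (h:ℂ) * a₁ z) y) x
            + lap (Tt φ ψ (fun z => a₀ z + (h:ℂ) * a₁ z)) x)
          + lap (lap (fun z => a₀ z + (h:ℂ) * a₁ z)) x) :=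
    conj_laplap hφ hψ heik h hh hv x
  have hsum : (∑ i : Fin n, A x i * (-I * pd i (fun y => Ee φ ψ h y * (a₀ y + (h:ℂ) * a₁ y)) x))
      = Ee φ ψ h x * ∑ i : Fin n, A x i * (-I * (pd i (Phi φ ψ) x / h * (a₀ x + (h:ℂ) * a₁ x)
          + (pd i a₀ x + (h:ℂ) * pd i a₁ x))) := by
    rw [Finset.mul_sum]
    refine Finset.sum_congr rfl fun i _ => ?_
    rw [conj_pd hφ hψ h i (hvd x), hs5 i]
    ring
  have e5 : (∑ i : Fin n, A x i * (-I * (pd i (Phi φ ψ) x / h * (a₀ x + (h:ℂ) * a₁ x)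
          + (pd i a₀ x + (h:ℂ) * pd i a₁ x))))
      = (∑ i : Fin n, A x i * (-I * (pdR i φ x : ℂ) + I * (-I * (pdR i ψ x : ℂ))))
          * ((a₀ x + (h:ℂ) * a₁ x) / h)
        + (∑ i : Fin n, A x i * (-I * pd i a₀ x))
        + (h:ℂ) * (∑ i : Fin n, A x i * (-I * pd i a₁ x)) := by
    have hterm : ∀ i ∈ Finset.univ, A x i * (-I * (pd i (Phi φ ψ) x / h * (a₀ x + (h:ℂ) * a₁ x)
          + (pd i a₀ x + (h:ℂ) * pd i a₁ x)))
        = A x i * (-I * (pdR i φ x : ℂ) + I * (-I * (pdR i ψ x : ℂ))) * ((a₀ x + (h:ℂ) * a₁ x) / h)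
          + A x i * (-I * pd i a₀ x) + (h:ℂ) * (A x i * (-I * pd i a₁ x)) := fun i _ => by
      rw [pd_Phi hφ hψ i x]
      field_simp
      ring
    rw [Finset.sum_congr rfl hterm, Finset.sum_add_distrib, Finset.sum_add_distrib,
      ← Finset.sum_mul, ← Finset.mul_sum]
  have expand : LAq A q (fun y => Ee φ ψ h y * (a₀ y + (h:ℂ) * a₁ y)) x
      = Ee φ ψ h x * ((4 / (h:ℂ)^2) * Tt φ ψ (Tt φ ψ (fun z => a₀ z + (h:ℂ) * a₁ z)) x
          + (2 / (h:ℂ)) * (Tt φ ψ (fun y => lap (fun z => a₀ z + (h:ℂ) * a₁ z) y) x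
            + lap (Tt φ ψ (fun z => a₀ z + (h:ℂ) * a₁ z)) x)
          + lap (lap (fun z => a₀ z + (h:ℂ) * a₁ z)) x
          + (∑ i : Fin n, A x i * (-I * (pd i (Phi φ ψ) x / h * (a₀ x + (h:ℂ) * a₁ x)
              + (pd i a₀ x + (h:ℂ) * pd i a₁ x))))
          + q x * (a₀ x + (h:ℂ) * a₁ x)) := by
    unfold LAq
    rw [hlap2, hsum]
    ring
  have grouped : ∀ E F G : ℂ, E * ((h:ℂ)^4 * (F * G)) = (E * F) * ((h:ℂ)^4 * G) :=
    fun E F G => by ring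
  rw [expand, grouped, hEx, one_mul, hs1, hs2, hs3, hs4, e5, h1, h2]
  unfold Pfun Qfun
  generalize (∑ i : Fin n, A x i * (-I * (pdR i φ x : ℂ) + I * (-I * (pdR i ψ x : ℂ)))) = S
  generalize (∑ i : Fin n, A x i * (-I * pd i a₀ x)) = S0
  generalize (∑ i : Fin n, A x i * (-I * pd i a₁ x)) = S1
  simp only [div_eq_mul_inv, ← inv_pow]
  generalize hbdef : ((h:ℂ))⁻¹ = b
  have hbrel : (h:ℂ) * b = 1 := by rw [← hbdef]; exact mul_inv_cancel₀ hh'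
  linear_combination ((h:ℂ)^4 * (-2*b*(lap (Tt φ ψ a₀) x + Tt φ ψ (fun y => lap a₀ y) x)
    - b*S*(a₀ x) + 2*(Tt φ ψ (fun y => lap a₁ y) x + lap (Tt φ ψ a₁) x) + S*(a₁ x))) * hbrel

/-- If `φ, ψ` satisfy the eikonal equations, `a₀` solves the first
transport equation `T²a₀ = 0` and `a₁` solves the second transport equation
`T²a₁ = -(1/2)(Δ∘T + T∘Δ)a₀ - (1/4)A·(Dφ + iDψ)a₀`, then
`e^{-(φ+iψ)/h} h⁴ ℒ_{A,q}(e^{(φ+iψ)/h}(a₀ + h a₁)) = O(h⁴)` in `L²(Ω)`. -/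
theorem stmt_18 (n : ℕ) (hn : 3 ≤ n) (Ω : Set (EuclideanSpace ℝ (Fin n)))
    (hΩo : IsOpen Ω) (hΩb : Bornology.IsBounded Ω)
    (φ ψ : EuclideanSpace ℝ (Fin n) → ℝ)
    (hφ : ContDiff ℝ (⊤ : ℕ∞) φ) (hψ : ContDiff ℝ (⊤ : ℕ∞) ψ)
    (heik : ∀ x, (∑ i : Fin n, (pdR i ψ x) ^ 2) = (∑ i : Fin n, (pdR i φ x) ^ 2) ∧
      (∑ i : Fin n, (pdR i φ x) * (pdR i ψ x)) = 0)
    (A : EuclideanSpace ℝ (Fin n) → Fin n → ℂ)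
    (hA : ∀ i, ContDiff ℝ 4 (fun x => A x i))
    (q : EuclideanSpace ℝ (Fin n) → ℂ) (hq : Measurable q)
    (hqb : ∃ M, ∀ x ∈ Ω, ‖q x‖ ≤ M)
    (a₀ a₁ : EuclideanSpace ℝ (Fin n) → ℂ)
    (ha₀ : ContDiff ℝ (⊤ : ℕ∞) a₀) (ha₁ : ContDiff ℝ 4 a₁)
    (htr1 : ∀ x ∈ Ω, Tt φ ψ (Tt φ ψ a₀) x = 0)
    (htr2 : ∀ x ∈ Ω, Tt φ ψ (Tt φ ψ a₁) x
      = -(1 / 2 : ℂ) * (lap (Tt φ ψ a₀) x + Tt φ ψ (fun y => lap a₀ y) x)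
        - (1 / 4 : ℂ) * (∑ i : Fin n,
            A x i * (-I * (pdR i φ x : ℂ) + I * (-I * (pdR i ψ x : ℂ)))) * a₀ x) :
    ∃ C : ℝ, ∀ h : ℝ, 0 < h → h ≤ 1 →
      (∫ x in Ω, ‖Complex.exp (-((φ x : ℂ) + I * (ψ x : ℂ)) / h)
          * ((h ^ 4 : ℂ) * LAq A q
              (fun y => Complex.exp (((φ y : ℂ) + I * (ψ y : ℂ)) / h)
                * (a₀ y + h * a₁ y)) x)‖ ^ 2) ^ (1 / 2 : ℝ)
        ≤ C * h ^ 4 := by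
  obtain ⟨Mq, hMq⟩ := hqb
  have hK : IsCompact (closure Ω) := hΩb.isCompact_closure
  have hconta₀ : Continuous a₀ := ha₀.continuous
  have hconta₁ : Continuous a₁ := ha₁.continuous
  -- continuity of the coefficient functions
  have hScont : Continuous (fun x => (∑ i : Fin n,
      A x i * (-I * (pdR i φ x : ℂ) + I * (-I * (pdR i ψ x : ℂ))))) := by
    refine continuous_finset_sum _ fun i _ => (hA i).continuous.mul ?_
    exact (continuous_const.mul
        (Complex.continuous_ofReal.comp (contDiff_pdR (m := 0) hφ (by simp) i).continuous)).add
      (continuous_const.mul (continuous_const.mul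
        (Complex.continuous_ofReal.comp (contDiff_pdR (m := 0) hψ (by simp) i).continuous)))
  have hla₁1 : ContDiff ℝ 1 (lap a₁) := contDiff_lap ha₁ (by norm_num)
  have hTla₁ : ContDiff ℝ (0 : ℕ) (Tt φ ψ (fun y => lap a₁ y)) :=
    contDiff_Tt (f := fun y => lap a₁ y) hφ hψ hla₁1 (by norm_num)
  have hTa₁3 : ContDiff ℝ 3 (Tt φ ψ a₁) := contDiff_Tt hφ hψ ha₁ (by norm_num)
  have hlTa₁ : ContDiff ℝ (0 : ℕ) (lap (Tt φ ψ a₁)) := contDiff_lap hTa₁3 (by norm_num)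
  have hlla₀ : ContDiff ℝ (0 : ℕ) (lap (lap a₀)) :=
    contDiff_lap (contDiff_lap (m := ((⊤ : ℕ∞) : WithTop ℕ∞)) ha₀ (by exact WithTop.coe_le_coe.2 le_top)) (by exact WithTop.coe_le_coe.2 le_top)
  have hla₁2 : ContDiff ℝ 2 (lap a₁) := contDiff_lap ha₁ (by norm_num)
  have hlla₁ : ContDiff ℝ (0 : ℕ) (lap (lap a₁)) := contDiff_lap hla₁2 (by norm_num)
  have hS0cont : Continuous (fun x => (∑ i : Fin n, A x i * (-I * pd i a₀ x))) :=
    continuous_finset_sum _ fun i _ => (hA i).continuous.mul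
      (continuous_const.mul (contDiff_pd (m := 0) ha₀ (by simp) i).continuous)
  have hS1cont : Continuous (fun x => (∑ i : Fin n, A x i * (-I * pd i a₁ x))) :=
    continuous_finset_sum _ fun i _ => (hA i).continuous.mul
      (continuous_const.mul (contDiff_pd (m := 0) ha₁ (by norm_num) i).continuous)
  have hPc : Continuous (fun x =>
      2 * (Tt φ ψ (fun y => lap a₁ y) x + lap (Tt φ ψ a₁) x) + lap (lap a₀) x
      + (∑ i : Fin n, A x i * (-I * (pdR i φ x : ℂ) + I * (-I * (pdR i ψ x : ℂ)))) * a₁ x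
      + (∑ i : Fin n, A x i * (-I * pd i a₀ x))) :=
    ((((continuous_const.mul (hTla₁.continuous.add hlTa₁.continuous)).add
      hlla₀.continuous).add (hScont.mul hconta₁)).add hS0cont)
  have hQc : Continuous (fun x => lap (lap a₁) x
      + (∑ i : Fin n, A x i * (-I * pd i a₁ x))) := hlla₁.continuous.add hS1cont
  obtain ⟨C1, hC1⟩ := hK.exists_bound_of_continuousOn hPc.continuousOn
  obtain ⟨C2, hC2⟩ := hK.exists_bound_of_continuousOn hconta₀.continuousOn
  obtain ⟨C3, hC3⟩ := hK.exists_bound_of_continuousOn hQc.continuousOn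
  obtain ⟨C4, hC4⟩ := hK.exists_bound_of_continuousOn hconta₁.continuousOn
  set B : ℝ := (C1 + max Mq 0 * max C2 0) + (C3 + max Mq 0 * max C4 0) with hBdef
  set B' : ℝ := max B 0 with hB'def
  have hB'0 : (0:ℝ) ≤ B' := le_max_right _ _
  refine ⟨B' * ((volume Ω).toReal) ^ (1/2 : ℝ), ?_⟩
  intro h h0 h1
  have hne : h ≠ 0 := ne_of_gt h0
  -- pointwise bound on Ω
  have hptw : ∀ x ∈ Ω, ‖Complex.exp (-((φ x : ℂ) + I * (ψ x : ℂ)) / h)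
      * ((h ^ 4 : ℂ) * LAq A q
          (fun y => Complex.exp (((φ y : ℂ) + I * (ψ y : ℂ)) / h)
            * (a₀ y + h * a₁ y)) x)‖ ≤ h ^ 4 * B' := by
    intro x hx
    have hxK : x ∈ closure Ω := subset_closure hx
    have hkx : Complex.exp (-((φ x : ℂ) + I * (ψ x : ℂ)) / h)
        * ((h ^ 4 : ℂ) * LAq A q
            (fun y => Complex.exp (((φ y : ℂ) + I * (ψ y : ℂ)) / h)
              * (a₀ y + h * a₁ y)) x)
        = (h:ℂ)^4 * (Pfun φ ψ A q a₀ a₁ x + (h:ℂ) * Qfun A q a₁ x) :=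
      key hφ hψ heik A q ha₀ ha₁ h hne x (htr1 x hx) (htr2 x hx)
    rw [hkx, norm_mul, norm_pow, Complex.norm_real, Real.norm_eq_abs, abs_of_pos h0]
    refine mul_le_mul_of_nonneg_left ?_ (by positivity)
    have hqx : ‖q x‖ ≤ max Mq 0 := le_trans (hMq x hx) (le_max_left _ _)
    have hP : ‖Pfun φ ψ A q a₀ a₁ x‖ ≤ C1 + max Mq 0 * max C2 0 := by
      calc ‖Pfun φ ψ A q a₀ a₁ x‖
          ≤ ‖2 * (Tt φ ψ (fun y => lap a₁ y) x + lap (Tt φ ψ a₁) x) + lap (lap a₀) x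
              + (∑ i : Fin n, A x i * (-I * (pdR i φ x : ℂ) + I * (-I * (pdR i ψ x : ℂ)))) * a₁ x
              + (∑ i : Fin n, A x i * (-I * pd i a₀ x))‖ + ‖q x * a₀ x‖ := norm_add_le _ _
        _ ≤ C1 + max Mq 0 * max C2 0 := by
            refine add_le_add (hC1 x hxK) ?_
            rw [norm_mul]
            exact mul_le_mul hqx (le_trans (hC2 x hxK) (le_max_left _ _))
              (norm_nonneg _) (le_max_right _ _)
    have hQ : ‖Qfun A q a₁ x‖ ≤ C3 + max Mq 0 * max C4 0 := by
      calc ‖Qfun A q a₁ x‖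
          ≤ ‖lap (lap a₁) x + (∑ i : Fin n, A x i * (-I * pd i a₁ x))‖ + ‖q x * a₁ x‖ :=
            norm_add_le _ _
        _ ≤ C3 + max Mq 0 * max C4 0 := by
            refine add_le_add (hC3 x hxK) ?_
            rw [norm_mul]
            exact mul_le_mul hqx (le_trans (hC4 x hxK) (le_max_left _ _))
              (norm_nonneg _) (le_max_right _ _)
    calc ‖Pfun φ ψ A q a₀ a₁ x + (h:ℂ) * Qfun A q a₁ x‖
        ≤ ‖Pfun φ ψ A q a₀ a₁ x‖ + ‖(h:ℂ) * Qfun A q a₁ x‖ := norm_add_le _ _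
      _ ≤ ‖Pfun φ ψ A q a₀ a₁ x‖ + ‖Qfun A q a₁ x‖ := by
          refine add_le_add (le_refl _) ?_
          rw [norm_mul, Complex.norm_real, Real.norm_eq_abs, abs_of_pos h0]
          nlinarith [norm_nonneg (Qfun A q a₁ x)]
      _ ≤ B := by rw [hBdef]; exact add_le_add hP hQ
      _ ≤ B' := le_max_left _ _
  -- measurability
  have measpd : ∀ (g : EuclideanSpace ℝ (Fin n) → ℂ) (i : Fin n), Measurable (pd i g) :=
    fun g i => measurable_fderiv_apply_const ℝ g _
  have hu_cont : Continuous (fun y => Complex.exp (((φ y : ℂ) + I * (ψ y : ℂ)) / h)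
      * (a₀ y + (h:ℂ) * a₁ y)) :=
    (Complex.continuous_exp.comp (((Complex.continuous_ofReal.comp hφ.continuous).add
      (continuous_const.mul (Complex.continuous_ofReal.comp hψ.continuous))).div_const _)).mul
      (hconta₀.add (continuous_const.mul hconta₁))
  have hGm : Measurable (fun x => Complex.exp (-((φ x : ℂ) + I * (ψ x : ℂ)) / h)
      * ((h ^ 4 : ℂ) * LAq A q
          (fun y => Complex.exp (((φ y : ℂ) + I * (ψ y : ℂ)) / h)
            * (a₀ y + h * a₁ y)) x)) := by
    refine Measurable.mul ?_ (Measurable.const_mul ?_ _)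
    · exact (Complex.continuous_exp.comp ((((Complex.continuous_ofReal.comp hφ.continuous).add
        (continuous_const.mul (Complex.continuous_ofReal.comp
          hψ.continuous))).neg).div_const _)).measurable
    · have hrfl : LAq A q
          (fun y => Complex.exp (((φ y : ℂ) + I * (ψ y : ℂ)) / h) * (a₀ y + h * a₁ y))
          = fun x => (∑ i : Fin n, pd i (pd i (lap
              (fun y => Complex.exp (((φ y : ℂ) + I * (ψ y : ℂ)) / h) * (a₀ y + h * a₁ y)))) x)
            + (∑ i : Fin n, A x i * (-I * pd i
              (fun y => Complex.exp (((φ y : ℂ) + I * (ψ y : ℂ)) / h) * (a₀ y + h * a₁ y)) x))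
            + q x * (Complex.exp (((φ x : ℂ) + I * (ψ x : ℂ)) / h) * (a₀ x + h * a₁ x)) := rfl
      rw [hrfl]
      exact ((Finset.measurable_sum _ fun i _ => measpd _ i).add
        (Finset.measurable_sum _ fun i _ => (hA i).continuous.measurable.mul
          ((measpd _ i).const_mul _))).add (hq.mul hu_cont.measurable)
  have hμ : volume Ω < ⊤ := hΩb.measure_lt_top
  have hbdd : ∀ x ∈ Ω, ‖(‖Complex.exp (-((φ x : ℂ) + I * (ψ x : ℂ)) / h)
      * ((h ^ 4 : ℂ) * LAq A q
          (fun y => Complex.exp (((φ y : ℂ) + I * (ψ y : ℂ)) / h)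
            * (a₀ y + h * a₁ y)) x)‖ ^ 2 : ℝ)‖ ≤ (h ^ 4 * B') ^ 2 := by
    intro x hx
    rw [Real.norm_eq_abs, _root_.abs_of_nonneg (by positivity)]
    exact pow_le_pow_left₀ (norm_nonneg _) (hptw x hx) 2
  have hInt := norm_setIntegral_le_of_norm_le_const hμ hbdd
  have h5 : (∫ x in Ω, ‖Complex.exp (-((φ x : ℂ) + I * (ψ x : ℂ)) / h)
      * ((h ^ 4 : ℂ) * LAq A q
          (fun y => Complex.exp (((φ y : ℂ) + I * (ψ y : ℂ)) / h)
            * (a₀ y + h * a₁ y)) x)‖ ^ 2)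
      ≤ (h ^ 4 * B') ^ 2 * (volume Ω).toReal :=
    le_trans (le_abs_self _) (by rw [← Real.norm_eq_abs]; exact hInt)
  have hnn : 0 ≤ ∫ x in Ω, ‖Complex.exp (-((φ x : ℂ) + I * (ψ x : ℂ)) / h)
      * ((h ^ 4 : ℂ) * LAq A q
          (fun y => Complex.exp (((φ y : ℂ) + I * (ψ y : ℂ)) / h)
            * (a₀ y + h * a₁ y)) x)‖ ^ 2 :=
    integral_nonneg fun x => by positivity
  have hμ0 : (0:ℝ) ≤ (volume Ω).toReal := ENNReal.toReal_nonneg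
  calc (∫ x in Ω, ‖Complex.exp (-((φ x : ℂ) + I * (ψ x : ℂ)) / h)
      * ((h ^ 4 : ℂ) * LAq A q
          (fun y => Complex.exp (((φ y : ℂ) + I * (ψ y : ℂ)) / h)
            * (a₀ y + h * a₁ y)) x)‖ ^ 2) ^ (1/2 : ℝ)
      ≤ ((h ^ 4 * B') ^ 2 * (volume Ω).toReal) ^ (1/2 : ℝ) :=
        Real.rpow_le_rpow hnn h5 (by norm_num)
    _ = (h ^ 4 * B') * ((volume Ω).toReal) ^ (1/2 : ℝ) := by
        rw [Real.mul_rpow (by positivity) hμ0]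
        congr 1
        rw [← Real.rpow_natCast (h ^ 4 * B') 2, ← Real.rpow_mul (by positivity)]
        norm_num
    _ = (B' * ((volume Ω).toReal) ^ (1/2 : ℝ)) * h ^ 4 := by ring
end
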